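/- For every h₁, h₂ > 0, every polynomial q(x, y) = ∑_{0 ≤ p, r ≤ 2} c_{p,r} x^p y^r of degree at most 2 in each variable, and every (x, y) ∈ ℝ², the tensor-product modified B-spline interpolant reproduces q exactly: ∑_{(j₁, j₂) ∈ ℤ²} q(j₁h₁, j₂h₂) · W₄(x − j₁h₁, h₁) · W₄(y − j₂h₂, h₂) = q(x, y). -/

import Mathlib

/-- Monaghan's modified cubic B-spline interpolation kernel `W₄`. -/
noncomputable def W4 (x h : ℝ) : ℝ :=
  let s := |x| / h
  if s ≤ 1 then 1 - 5/2 * s^2 + 3/2 * s^3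
  else if s ≤ 2 then 1/2 * (2 - s)^2 * (1 - s)
  else 0

/-!
Rescaling by `h` reduces everything to the unit lattice `ℤ`. At a point `t = n + u` with
`n = ⌊t⌋` and `0 ≤ u < 1`, only the four nodes `n - 1, …, n + 2` carry weight, and the four
weights are explicit cubics in `u`; a direct computation shows that they reproduce
`1, t, t²`. A polynomial of degree at most 2 in each variable is, for fixed `x`, a quadratic
in `y` and, for fixed `y`, a quadratic in `x`, so the tensor-product sum reproduces it by
summing first over `j₂` and then over `j₁`.
-/

open Finset

lemma W4_eq_W4_div {h : ℝ} (hh : 0 < h) (x : ℝ) : W4 x h = W4 (x / h) 1 := by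
  simp only [W4, abs_div, abs_of_pos hh, div_one]

lemma W4_one_of_abs_le_one {x : ℝ} (hx : |x| ≤ 1) :
    W4 x 1 = 1 - 5/2 * |x| ^ 2 + 3/2 * |x| ^ 3 := by
  simp only [W4, div_one, if_pos hx]

lemma W4_one_of_one_le_abs_of_abs_le_two {x : ℝ} (h₁ : 1 ≤ |x|) (h₂ : |x| ≤ 2) :
    W4 x 1 = 1/2 * (2 - |x|) ^ 2 * (1 - |x|) := by
  simp only [W4, div_one]
  split_ifs with h
  · rw [le_antisymm h h₁]; norm_num
  · rfl

lemma W4_one_of_two_le_abs {x : ℝ} (hx : 2 ≤ |x|) : W4 x 1 = 0 := by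
  rcases hx.eq_or_lt with h | h
  · rw [W4_one_of_one_le_abs_of_abs_le_two (by linarith) h.ge, ← h]; norm_num
  · simp only [W4, div_one, if_neg (by linarith : ¬ |x| ≤ 1), if_neg (not_le.2 h)]

lemma W4_one_sub_intCast_eq_zero {t : ℝ} {j : ℤ} (hj : j ∉ Icc (⌊t⌋ - 1) (⌊t⌋ + 2)) :
    W4 (t - j) 1 = 0 := by
  apply W4_one_of_two_le_abs
  have hlo := Int.floor_le t
  have hhi := Int.lt_floor_add_one t
  rw [mem_Icc, not_and_or, not_le, not_le] at hj
  rcases hj with hj | hj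
  · have : (j : ℝ) + 2 ≤ ⌊t⌋ := by exact_mod_cast (show j + 2 ≤ ⌊t⌋ by omega)
    rw [abs_of_nonneg (by linarith)]; linarith
  · have : (⌊t⌋ : ℝ) + 3 ≤ j := by exact_mod_cast (show ⌊t⌋ + 3 ≤ j by omega)
    rw [abs_of_nonpos (by linarith)]; linarith

lemma sum_intCast_pow_mul_W4_one (t : ℝ) {p : ℕ} (hp : p ≤ 2) :
    ∑ j ∈ Icc (⌊t⌋ - 1) (⌊t⌋ + 2), (j : ℝ) ^ p * W4 (t - j) 1 = t ^ p := by
  set n := ⌊t⌋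
  set u := Int.fract t
  have hu₀ : 0 ≤ u := Int.fract_nonneg t
  have hu₁ : u < 1 := Int.fract_lt_one t
  have ht : t = n + u := (Int.floor_add_fract t).symm
  have hnodes : Icc (n - 1) (n + 2) = {n - 1, n, n + 1, n + 2} := by
    ext j; simp only [mem_Icc, mem_insert, mem_singleton]; omega
  have w₀ : W4 (t - ↑(n - 1)) 1 = -u * (1 - u) ^ 2 / 2 := by
    rw [W4_one_of_one_le_abs_of_abs_le_two] <;>
      rw [show t - ↑(n - 1) = u + 1 by push_cast; linarith, abs_of_nonneg (by linarith)]
    · ring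
    all_goals linarith
  have w₁ : W4 (t - ↑n) 1 = 1 - 5/2 * u ^ 2 + 3/2 * u ^ 3 := by
    rw [W4_one_of_abs_le_one] <;> rw [show t - n = u by linarith, abs_of_nonneg hu₀]
    exact hu₁.le
  have w₂ : W4 (t - ↑(n + 1)) 1 = 1 - 5/2 * (1 - u) ^ 2 + 3/2 * (1 - u) ^ 3 := by
    rw [W4_one_of_abs_le_one] <;>
      rw [show t - ↑(n + 1) = -(1 - u) by push_cast; linarith, abs_neg,
        abs_of_nonneg (by linarith)]
    linarith
  have w₃ : W4 (t - ↑(n + 2)) 1 = u ^ 2 * (u - 1) / 2 := by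
    rw [W4_one_of_one_le_abs_of_abs_le_two] <;>
      rw [show t - ↑(n + 2) = -(2 - u) by push_cast; linarith, abs_neg,
        abs_of_nonneg (by linarith)]
    · ring
    all_goals linarith
  rw [hnodes, sum_insert (by simp; omega), sum_insert (by simp), sum_insert (by simp), sum_singleton,
    w₀, w₁, w₂, w₃, ht]
  push_cast
  interval_cases p <;> ring

section Scaled

variable {h : ℝ} (hh : 0 < h) (z : ℝ)
include hh

lemma W4_sub_intCast_mul_eq_zero {j : ℤ} (hj : j ∉ Icc (⌊z / h⌋ - 1) (⌊z / h⌋ + 2)) :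
    W4 (z - j * h) h = 0 := by
  rw [W4_eq_W4_div hh, sub_div, mul_div_cancel_right₀ _ hh.ne']
  exact W4_one_sub_intCast_eq_zero hj

lemma sum_intCast_mul_pow_mul_W4 {p : ℕ} (hp : p ≤ 2) :
    ∑ j ∈ Icc (⌊z / h⌋ - 1) (⌊z / h⌋ + 2), ((j : ℝ) * h) ^ p * W4 (z - j * h) h = z ^ p := by
  have hz : z = z / h * h := (div_mul_cancel₀ z hh.ne').symm
  calc ∑ j ∈ Icc (⌊z / h⌋ - 1) (⌊z / h⌋ + 2), ((j : ℝ) * h) ^ p * W4 (z - j * h) h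
      = h ^ p * ∑ j ∈ Icc (⌊z / h⌋ - 1) (⌊z / h⌋ + 2), (j : ℝ) ^ p * W4 (z / h - j) 1 := by
        rw [mul_sum]
        refine sum_congr rfl fun j _ => ?_
        rw [W4_eq_W4_div hh, sub_div, mul_div_cancel_right₀ _ hh.ne']
        ring
    _ = z ^ p := by rw [sum_intCast_pow_mul_W4_one _ hp, ← mul_pow, mul_comm, ← hz]

lemma sum_quadratic_mul_W4 (d : Fin 3 → ℝ) :
    ∑ j ∈ Icc (⌊z / h⌋ - 1) (⌊z / h⌋ + 2),
        (∑ r : Fin 3, d r * ((j : ℝ) * h) ^ (r : ℕ)) * W4 (z - j * h) h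
      = ∑ r : Fin 3, d r * z ^ (r : ℕ) := by
  simp only [sum_mul, mul_assoc]
  rw [sum_comm]
  refine sum_congr rfl fun r _ => ?_
  rw [← mul_sum, sum_intCast_mul_pow_mul_W4 hh z (by omega)]

end Scaled

/-- The tensor-product modified B-spline interpolant exactly reproduces every
polynomial `q(x, y) = ∑_{0 ≤ p, r ≤ 2} c_{p,r} x^p y^r` of degree at most 2 in
each variable. -/
theorem W4_tensor_reproduces_biquadratics
    (h₁ h₂ : ℝ) (hh₁ : 0 < h₁) (hh₂ : 0 < h₂)
    (c : Fin 3 → Fin 3 → ℝ)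
    (q : ℝ → ℝ → ℝ)
    (hq : ∀ x y : ℝ, q x y = ∑ p : Fin 3, ∑ r : Fin 3, c p r * x ^ (p : ℕ) * y ^ (r : ℕ))
    (x y : ℝ) :
    ∑' j : ℤ × ℤ, q (j.1 * h₁) (j.2 * h₂) * W4 (x - j.1 * h₁) h₁ * W4 (y - j.2 * h₂) h₂
      = q x y := by
  have quadratic_in_x (a b : ℝ) : q a b = ∑ p : Fin 3, (∑ r, c p r * b ^ (r : ℕ)) * a ^ (p : ℕ) := by
    simp only [hq, sum_mul, mul_right_comm]
  have quadratic_in_y (a b : ℝ) : q a b = ∑ r : Fin 3, (∑ p, c p r * a ^ (p : ℕ)) * b ^ (r : ℕ) := by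
    rw [hq, sum_comm]; simp only [sum_mul]
  have support : ∀ j ∉ Icc (⌊x / h₁⌋ - 1) (⌊x / h₁⌋ + 2) ×ˢ Icc (⌊y / h₂⌋ - 1) (⌊y / h₂⌋ + 2),
      q (j.1 * h₁) (j.2 * h₂) * W4 (x - j.1 * h₁) h₁ * W4 (y - j.2 * h₂) h₂ = 0 := by
    intro j hj
    rcases not_and_or.1 (mem_product.not.1 hj) with hj | hj
    · rw [W4_sub_intCast_mul_eq_zero hh₁ x hj]; ring
    · rw [W4_sub_intCast_mul_eq_zero hh₂ y hj, mul_zero]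
  rw [tsum_eq_sum support, sum_product]
  calc _ = ∑ j₁ ∈ Icc (⌊x / h₁⌋ - 1) (⌊x / h₁⌋ + 2),
          (∑ j₂ ∈ Icc (⌊y / h₂⌋ - 1) (⌊y / h₂⌋ + 2), q (j₁ * h₁) (j₂ * h₂) * W4 (y - j₂ * h₂) h₂) *
            W4 (x - j₁ * h₁) h₁ := by
        simp only [sum_mul, mul_right_comm]
    _ = ∑ j₁ ∈ Icc (⌊x / h₁⌋ - 1) (⌊x / h₁⌋ + 2), q (j₁ * h₁) y * W4 (x - j₁ * h₁) h₁ := by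
        refine sum_congr rfl fun j₁ _ => ?_
        rw [quadratic_in_y _ y, ← sum_quadratic_mul_W4 hh₂ y]
        simp only [quadratic_in_y _ (_ * h₂)]
    _ = q x y := by
        rw [quadratic_in_x x, ← sum_quadratic_mul_W4 hh₁ x]
        simp only [quadratic_in_x (_ * h₁)]
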